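/- arXiv:2203.08535 — 5 statements merged into one kernel-verified Lean document; each statement's English description precedes it below -/
import Mathlib

section
/- For q ∈ [0,1), the function cn_p(·,q) is even, 2K_{1,p}(q)-antiperiodic (i.e., cn_p(x + 2K_{1,p}(q), q) = -cn_p(x,q)), and strictly decreasing from 1 to -1 on [0, 2K_{1,p}(q)]. -/
open Real MeasureTheory Set intervalIntegral Filter

noncomputable section

/-- Incomplete p-elliptic integral of the first kind, type 1. -/
def F1 (p q x : ℝ) : ℝ :=
  ∫ θ in (0:ℝ)..x, |Real.cos θ| ^ (1 - 2/p) / Real.sqrt (1 - q^2 * Real.sin θ ^ 2)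

/-- Complete p-elliptic integral of the first kind, type 1. -/
def K1 (p q : ℝ) : ℝ := F1 p q (π/2)

/-- Incomplete p-elliptic integral of the second kind, type 1. -/
def E1 (p q x : ℝ) : ℝ :=
  ∫ θ in (0:ℝ)..x, Real.sqrt (1 - q^2 * Real.sin θ ^ 2) * |Real.cos θ| ^ (1 - 2/p)

/-- Complete p-elliptic integral of the second kind, type 1. -/
def E1c (p q : ℝ) : ℝ := E1 p q (π/2)

/-- Incomplete p-elliptic integral of the first kind, type 2. -/
def F2 (p q x : ℝ) : ℝ :=
  ∫ θ in (0:ℝ)..x, (1 - q^2 * Real.sin θ ^ 2) ^ (-(1/p))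

/-- Complete p-elliptic integral of the first kind, type 2. -/
def K2 (p q : ℝ) : ℝ := F2 p q (π/2)

open Classical in
/-- Domain of the amplitude parametrization: restricted to `(-π/2, π/2)` when `q = 1` and `p ≤ 2`. -/
def amDom (p q : ℝ) : Set ℝ := if q = 1 ∧ p ≤ 2 then Ioo (-(π/2)) (π/2) else univ

/-- `g` is the inverse of `f`, with `f` regarded as a bijection from `S` onto `ℝ`. -/
def IsInverseOn (f g : ℝ → ℝ) (S : Set ℝ) : Prop :=
  (∀ y ∈ S, g (f y) = y) ∧ ∀ x : ℝ, g x ∈ S ∧ f (g x) = x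

/-!
The integrand of `F1 p q` is nonnegative, even and `π`-periodic, and its only singularities, at the
zeros of `cos`, are of order `1 - 2/p > -1`, hence integrable. So `F1 p q` is increasing and odd
with `F1 p q (x + π) = F1 p q x + 2 K1 p q`, and its inverse `am` is increasing and odd with
`am (x + 2 K1 p q) = am x + π`; in particular `am` maps `[0, 2 K1 p q]` increasingly onto `[0, π]`.
Finally `cn = φ ∘ cos ∘ am` with `φ t = |t| ^ (2/p - 1) * t`, which is odd, increasing and fixes `1`.
-/

open Function

theorem abs_rpow_sub_one_mul_neg (r t : ℝ) : |-t| ^ (r - 1) * -t = -(|t| ^ (r - 1) * t) := by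
  rw [abs_neg, mul_neg]

theorem abs_rpow_sub_one_mul_of_nonneg {r t : ℝ} (hr : r ≠ 0) (ht : 0 ≤ t) :
    |t| ^ (r - 1) * t = t ^ r := by
  rcases ht.eq_or_lt with rfl | ht
  · rw [mul_zero, zero_rpow hr]
  · rw [abs_of_pos ht, ← rpow_add_one ht.ne', sub_add_cancel]

theorem strictMono_abs_rpow_sub_one_mul {r : ℝ} (hr : 0 < r) :
    StrictMono fun t : ℝ => |t| ^ (r - 1) * t := by
  refine strictMono_of_odd_strictMonoOn_nonneg (abs_rpow_sub_one_mul_neg r) ?_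
  intro x hx y hy hxy
  simp only [abs_rpow_sub_one_mul_of_nonneg hr.ne' hx, abs_rpow_sub_one_mul_of_nonneg hr.ne' hy]
  exact rpow_lt_rpow hx hxy hr

theorem abs_cos_rpow_le {c θ : ℝ} (hc : c ≤ 0) (hθ : θ ∈ Ico 0 (π / 2)) :
    |cos θ| ^ c ≤ (2 / π) ^ c * (π / 2 - θ) ^ c := by
  have hpos : 0 < 2 / π * (π / 2 - θ) := mul_pos (by positivity) (by linarith [hθ.2])
  -- Jordan's inequality `2/π * x ≤ sin x` at `x = π/2 - θ`
  have hle : 2 / π * (π / 2 - θ) ≤ |cos θ| := by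
    rw [← sin_pi_div_two_sub]
    exact (mul_le_sin (by linarith [hθ.2]) (by linarith [hθ.1])).trans (le_abs_self _)
  rw [← mul_rpow (by positivity) (by linarith [hθ.2])]
  exact rpow_le_rpow_of_nonpos hpos hle hc

theorem intervalIntegrable_abs_cos_rpow {c : ℝ} (hc : -1 < c) (a b : ℝ) :
    IntervalIntegrable (fun θ => |cos θ| ^ c) volume a b := by
  rcases le_or_gt 0 c with hc0 | hc0
  · exact (continuous_cos.abs.rpow_const fun _ => Or.inr hc0).intervalIntegrable a b
  have hmeas : Measurable fun θ => |cos θ| ^ c := continuous_cos.measurable.abs.pow_const c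
  have hhalf : IntervalIntegrable (fun θ => |cos θ| ^ c) volume 0 (π / 2) := by
    have hbound : IntervalIntegrable (fun θ => (2 / π) ^ c * (π / 2 - θ) ^ c) volume 0 (π / 2) := by
      simpa using
        ((intervalIntegrable_rpow' hc (a := π / 2) (b := 0)).comp_sub_left (π / 2)).const_mul
          ((2 / π) ^ c)
    refine hbound.mono_fun' hmeas.aestronglyMeasurable ?_
    rw [uIoc_of_le (by positivity), ← Measure.restrict_congr_set Ico_ae_eq_Ioc]
    refine (ae_restrict_mem measurableSet_Ico).mono fun θ hθ => ?_
    dsimp only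
    rw [norm_of_nonneg (by positivity)]
    exact abs_cos_rpow_le hc0.le hθ
  have hreflect : IntervalIntegrable (fun θ => |cos θ| ^ c) volume (π / 2) π := by
    have h := (hhalf.comp_sub_left π).symm
    rw [sub_zero, sub_half] at h
    simpa only [cos_pi_sub, abs_neg] using h
  refine Periodic.intervalIntegrable₀ (fun θ => ?_) pi_ne_zero (hhalf.trans hreflect) a b
  simp [cos_add_pi]

section EvenPeriodicIntegral

variable {f : ℝ → ℝ}

theorem integral_zero_neg_of_even (hf : ∀ x, f (-x) = f x) (x : ℝ) :
    ∫ θ in (0 : ℝ)..-x, f θ = -∫ θ in (0 : ℝ)..x, f θ := by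
  have h := integral_comp_neg (a := 0) (b := x) f
  simp only [hf, neg_zero] at h
  rw [integral_symm, ← h]

theorem integral_zero_period_of_even {T : ℝ} (hf : ∀ x, f (-x) = f x) (hper : Periodic f T)
    (hint : ∀ a b, IntervalIntegrable f volume a b) :
    ∫ θ in (0 : ℝ)..T, f θ = 2 * ∫ θ in (0 : ℝ)..T / 2, f θ := by
  have hreflect : ∫ θ in T / 2..T, f θ = ∫ θ in (0 : ℝ)..T / 2, f θ := by
    have h := integral_comp_sub_left (a := 0) (b := T / 2) f T
    rw [sub_zero, sub_half] at h
    rw [← h]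
    exact integral_congr fun θ _ => by rw [sub_eq_neg_add, hper, hf]
  rw [← integral_add_adjacent_intervals (hint 0 (T / 2)) (hint (T / 2) T), hreflect, two_mul]

end EvenPeriodicIntegral

namespace IsInverseOn

variable {F am : ℝ → ℝ}

theorem map_neg (h : IsInverseOn F am univ) (hF : ∀ y, F (-y) = -F y) (x : ℝ) :
    am (-x) = -am x := by
  conv_lhs => rw [← (h.2 x).2, ← hF]
  exact h.1 _ trivial

theorem map_add (h : IsInverseOn F am univ) {S T : ℝ} (hF : ∀ y, F (y + T) = F y + S) (x : ℝ) :
    am (x + S) = am x + T := by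
  conv_lhs => rw [← (h.2 x).2, ← hF]
  exact h.1 _ trivial

theorem strictMono {S : Set ℝ} (h : IsInverseOn F am S) (hF : Monotone F) : StrictMono am :=
  fun x y hxy => lt_of_not_ge fun hyx => hxy.not_ge <| by
    simpa only [(h.2 x).2, (h.2 y).2] using hF hyx

end IsInverseOn

section F1

variable {p q : ℝ}

def F1Integrand (p q θ : ℝ) : ℝ := |cos θ| ^ (1 - 2 / p) / √(1 - q ^ 2 * sin θ ^ 2)

theorem F1Integrand_nonneg (θ : ℝ) : 0 ≤ F1Integrand p q θ := by
  unfold F1Integrand; positivity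

theorem F1Integrand_neg (θ : ℝ) : F1Integrand p q (-θ) = F1Integrand p q θ := by
  simp [F1Integrand]

theorem F1Integrand_periodic : Periodic (F1Integrand p q) π := fun θ => by
  simp [F1Integrand, cos_add_pi, sin_add_pi]

theorem intervalIntegrable_F1Integrand (hp : 1 < p) (hq : q ^ 2 < 1) (a b : ℝ) :
    IntervalIntegrable (F1Integrand p q) volume a b := by
  have hc : -1 < 1 - 2 / p := by
    have : 2 / p < 2 := (div_lt_iff₀ (by linarith)).2 (by linarith)
    linarith
  have hden : ∀ θ, 0 < 1 - q ^ 2 * sin θ ^ 2 := fun θ => by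
    nlinarith [sin_sq_le_one θ, sq_nonneg (sin θ), sq_nonneg q]
  have hinv : Continuous fun θ => (√(1 - q ^ 2 * sin θ ^ 2))⁻¹ := by
    exact Continuous.inv₀ (by fun_prop) fun θ => (sqrt_pos.2 (hden θ)).ne'
  have h := (intervalIntegrable_abs_cos_rpow hc a b).mul_continuousOn hinv.continuousOn
  simp only [← div_eq_mul_inv] at h
  exact h

theorem F1_eq_integral (x : ℝ) : F1 p q x = ∫ θ in (0 : ℝ)..x, F1Integrand p q θ := rfl

theorem F1_zero : F1 p q 0 = 0 := integral_same

theorem F1_neg (x : ℝ) : F1 p q (-x) = -F1 p q x :=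
  integral_zero_neg_of_even F1Integrand_neg x

theorem F1_monotone (hp : 1 < p) (hq : q ^ 2 < 1) : Monotone (F1 p q) := fun a b hab => by
  have hint := intervalIntegrable_F1Integrand hp hq
  rw [F1_eq_integral, F1_eq_integral, ← integral_add_adjacent_intervals (hint 0 a) (hint a b)]
  exact le_add_of_nonneg_right (integral_nonneg hab fun θ _ => F1Integrand_nonneg θ)

theorem F1_add_pi (hp : 1 < p) (hq : q ^ 2 < 1) (x : ℝ) :
    F1 p q (x + π) = F1 p q x + 2 * K1 p q := by
  have hint := intervalIntegrable_F1Integrand hp hq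
  rw [F1_eq_integral, F1Integrand_periodic.intervalIntegral_add_eq_add 0 x hint, zero_add,
    integral_zero_period_of_even F1Integrand_neg F1Integrand_periodic hint]
  rfl

end F1

/-- For `q ∈ [0,1)`, `cn_p(·,q)` is even, `2K_{1,p}(q)`-antiperiodic, and on
`[0, 2K_{1,p}(q)]` strictly decreasing from `1` to `-1`. -/
theorem cnp_properties (p q : ℝ) (hp : 1 < p) (hq : q ∈ Set.Ico (0:ℝ) 1)
    (am : ℝ → ℝ) (ham : IsInverseOn (F1 p q) am Set.univ)
    (cn : ℝ → ℝ) (hcn : ∀ x, cn x = |Real.cos (am x)| ^ (2/p - 1) * Real.cos (am x)) :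
    (∀ x : ℝ, cn (-x) = cn x) ∧
    (∀ x : ℝ, cn (x + 2 * K1 p q) = -cn x) ∧
    StrictAntiOn cn (Set.Icc 0 (2 * K1 p q)) ∧
    cn 0 = 1 ∧ cn (2 * K1 p q) = -1 := by
  have hq2 : q ^ 2 < 1 := by nlinarith [hq.1, hq.2]
  have hcn_comp : cn = (fun t => |t| ^ (2 / p - 1) * t) ∘ cos ∘ am := funext hcn
  have ham0 : am 0 = 0 := by simpa only [F1_zero] using ham.1 0 trivial
  have hamK : am (2 * K1 p q) = π := by
    have hFπ : F1 p q π = 2 * K1 p q := by simpa [F1_zero] using F1_add_pi hp hq2 0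
    rw [← hFπ]
    exact ham.1 π trivial
  have hamMono : StrictMono am := ham.strictMono (F1_monotone hp hq2)
  refine ⟨fun x => ?_, fun x => ?_, ?_, ?_, ?_⟩
  · rw [hcn, hcn, ham.map_neg F1_neg, cos_neg]
  · rw [hcn, hcn, ham.map_add (F1_add_pi hp hq2), cos_add_pi, abs_rpow_sub_one_mul_neg]
  · rw [hcn_comp]
    refine (strictMono_abs_rpow_sub_one_mul (by positivity)).comp_strictAntiOn
      (strictAntiOn_cos.comp_strictMonoOn (hamMono.strictMonoOn _) fun x hx => ?_)
    rw [← ham0, ← hamK]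
    exact ⟨hamMono.monotone hx.1, hamMono.monotone hx.2⟩
  · simp [hcn, ham0]
  · simp [hcn, hamK]
end
end

section
/- For p ∈ (1,∞) and q ∈ [0,1), the function dn_p(·,q) is real analytic on ℝ. -/
open Real MeasureTheory Set intervalIntegral Filter

noncomputable section

/-!
The integrand `(1 - q² sin² θ)^(-1/p)` of `F2` is analytic and positive when `q² < 1`. A
primitive of an analytic function is analytic (integrate its power series termwise), so `F2` is
an analytic, strictly increasing bijection of `ℝ` with nonvanishing derivative, and its inverse
`am` is analytic by the analytic inverse function theorem. Composing with the analytic map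
`θ ↦ (1 - q² sin² θ)^(1/p)` gives the claim.
-/

open Topology
open scoped NNReal ENNReal ContDiff

lemma analyticAt_tsum_mul_pow {b : ℕ → ℝ} {s : ℝ≥0} (hs : 0 < s)
    (hb : Summable fun n => ‖b n‖ * (s : ℝ) ^ n) :
    AnalyticAt ℝ (fun z => ∑' n, b n * z ^ n) 0 := by
  set P := FormalMultilinearSeries.ofScalars ℝ b
  have hrad : (s : ℝ≥0∞) ≤ P.radius :=
    P.le_radius_of_summable (by simpa only [P, FormalMultilinearSeries.ofScalars_norm] using hb)
  refine ((P.hasFPowerSeriesOnBall ((ENNReal.coe_pos.2 hs).trans_le hrad)).analyticAt).congr ?_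
  filter_upwards with z
  simp [P, FormalMultilinearSeries.sum, mul_comm]

lemma hasDerivAt_tsum_div_succ_mul_pow_succ {a : ℕ → ℝ} {s : ℝ}
    (ha : Summable fun n => ‖a n‖ * s ^ n) {z : ℝ} (hz : ‖z‖ < s) :
    HasDerivAt (fun z => ∑' n, a n / (n + 1) * z ^ (n + 1)) (∑' n, a n * z ^ n) z := by
  have hterm : ∀ n y, HasDerivAt (fun z => a n / (n + 1) * z ^ (n + 1)) (a n * y ^ n) y := by
    intro n y
    refine ((hasDerivAt_pow (n + 1) y).const_mul (a n / (n + 1))).congr_deriv ?_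
    rw [Nat.add_sub_cancel]
    push_cast
    field_simp
  refine hasDerivAt_tsum_of_isPreconnected ha Metric.isOpen_ball
    (convex_ball 0 s).isPreconnected (fun n y _ => hterm n y) (fun n y hy => ?_)
    (Metric.mem_ball_self ((norm_nonneg z).trans_lt hz)) ?_ (mem_ball_zero_iff.2 hz)
  · rw [norm_mul, norm_pow]
    exact mul_le_mul_of_nonneg_left
      (pow_le_pow_left₀ (norm_nonneg y) (mem_ball_zero_iff.1 hy).le n) (norm_nonneg _)
  · simp

lemma analyticAt_tsum_div_succ_mul_pow_succ {a : ℕ → ℝ} {s : ℝ≥0} (hs : 0 < s)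
    (ha : Summable fun n => ‖a n‖ * (s : ℝ) ^ n) :
    AnalyticAt ℝ (fun z => ∑' n, a n / (n + 1) * z ^ (n + 1)) 0 := by
  have hb : Summable fun n => ‖a n / (n + 1)‖ * (s : ℝ) ^ n := by
    refine ha.of_nonneg_of_le (fun n => by positivity) fun n => ?_
    gcongr
    rw [norm_div]
    exact div_le_self (norm_nonneg _)
      ((le_add_of_nonneg_left n.cast_nonneg).trans (le_abs_self _))
  refine (analyticAt_id.mul (analyticAt_tsum_mul_pow hs hb)).congr ?_
  filter_upwards with z
  change z * ∑' n, a n / (n + 1) * z ^ n = _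
  rw [← tsum_mul_left]
  congr with n
  ring

theorem analyticAt_of_eventually_hasDerivAt {F g : ℝ → ℝ} {x₀ : ℝ}
    (hg : AnalyticAt ℝ g x₀) (hF : ∀ᶠ x in 𝓝 x₀, HasDerivAt F (g x) x) :
    AnalyticAt ℝ F x₀ := by
  obtain ⟨P, r, hP⟩ := hg
  obtain ⟨ε, hε, hFε⟩ := Metric.eventually_nhds_iff_ball.1 hF
  obtain ⟨s, hs0, hsr, hsε⟩ : ∃ s : ℝ≥0, 0 < s ∧ (s : ℝ≥0∞) < r ∧ (s : ℝ) < ε := by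
    obtain ⟨s, hs0, hs⟩ :=
      ENNReal.lt_iff_exists_nnreal_btwn.1 (lt_min hP.r_pos (ENNReal.ofReal_pos.2 hε))
    exact ⟨s, ENNReal.coe_pos.1 hs0, hs.trans_le (min_le_left _ _),
      ENNReal.coe_lt_ofReal.1 (hs.trans_le (min_le_right _ _))⟩
  set a : ℕ → ℝ := fun n => P.coeff n
  have ha : Summable fun n => ‖a n‖ * (s : ℝ) ^ n := by
    simpa [a] using P.summable_norm_mul_pow (hsr.trans_le hP.r_le)
  set H : ℝ → ℝ := fun z => ∑' n, a n / (n + 1) * z ^ (n + 1)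
  have hHan : AnalyticAt ℝ H 0 := analyticAt_tsum_div_succ_mul_pow_succ hs0 ha
  have hderiv : ∀ y ∈ Metric.ball x₀ s, HasDerivAt (fun x => H (x - x₀)) (g y) y := by
    intro y hy
    have hgy : g y = ∑' n, a n * (y - x₀) ^ n := by
      have hmem : y - x₀ ∈ Metric.eball (0 : ℝ) r := by
        rw [Metric.mem_eball, edist_zero_right]
        exact (enorm_lt_coe.2 hy).trans hsr
      have := hP.hasSum hmem
      rw [add_sub_cancel] at this
      simpa [a, mul_comm] using this.tsum_eq.symm
    rw [hgy]
    exact (hasDerivAt_tsum_div_succ_mul_pow_succ ha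
      (by simpa [dist_eq_norm] using hy)).comp_sub_const y x₀
  have hsub : Metric.ball x₀ s ⊆ Metric.ball x₀ ε := Metric.ball_subset_ball hsε.le
  obtain ⟨c, hc⟩ :=
    Metric.isOpen_ball.exists_eq_add_of_deriv_eq (convex_ball _ _).isPreconnected
    (fun y hy => (hFε y (hsub hy)).differentiableAt.differentiableWithinAt)
    (fun y hy => (hderiv y hy).differentiableAt.differentiableWithinAt)
    (fun y hy => (hFε y (hsub hy)).deriv.trans (hderiv y hy).deriv.symm)
  have hHc : AnalyticAt ℝ (fun x => H (x - x₀) + c) x₀ :=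
    (hHan.comp_of_eq (analyticAt_id.sub analyticAt_const) (sub_self x₀)).add analyticAt_const
  exact hHc.congr
    (hc.eventuallyEq_of_mem (Metric.ball_mem_nhds x₀ (NNReal.coe_pos.2 hs0))).symm

lemma one_sub_sq_mul_sin_sq_pos {q : ℝ} (hq : q ^ 2 < 1) (θ : ℝ) :
    0 < 1 - q ^ 2 * Real.sin θ ^ 2 := by
  nlinarith [mul_le_of_le_one_right (sq_nonneg q) (Real.sin_sq_le_one θ)]

lemma contDiff_one_sub_sq_mul_sin_sq_rpow {q : ℝ} (hq : q ^ 2 < 1) (c : ℝ) :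
    ContDiff ℝ ω fun θ => (1 - q ^ 2 * Real.sin θ ^ 2) ^ c :=
  (contDiff_const.sub (contDiff_const.mul (Real.contDiff_sin.pow 2))).rpow_const_of_ne
    fun θ => (one_sub_sq_mul_sin_sq_pos hq θ).ne'

lemma hasDerivAt_F2 {q : ℝ} (hq : q ^ 2 < 1) (p x : ℝ) :
    HasDerivAt (F2 p q) ((1 - q ^ 2 * Real.sin x ^ 2) ^ (-(1 / p))) x :=
  ((contDiff_one_sub_sq_mul_sin_sq_rpow hq _).continuous.integral_hasStrictDerivAt 0 x).hasDerivAt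

lemma contDiff_F2 {q : ℝ} (hq : q ^ 2 < 1) (p : ℝ) : ContDiff ℝ ω (F2 p q) :=
  contDiff_omega_iff_analyticOnNhd.2 fun x _ =>
    analyticAt_of_eventually_hasDerivAt
      ((contDiff_one_sub_sq_mul_sin_sq_rpow hq _).analyticOnNhd x (mem_univ x))
      (Eventually.of_forall (hasDerivAt_F2 hq p))

lemma strictMono_F2 {q : ℝ} (hq : q ^ 2 < 1) (p : ℝ) : StrictMono (F2 p q) :=
  strictMono_of_hasDerivAt_pos (hasDerivAt_F2 hq p) fun x =>
    Real.rpow_pos_of_pos (one_sub_sq_mul_sin_sq_pos hq x) _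

theorem dnp_analytic_general (p q : ℝ) (hq : q ∈ Set.Ico (0:ℝ) 1)
    (am : ℝ → ℝ) (ham : IsInverseOn (F2 p q) am Set.univ) :
    AnalyticOnNhd ℝ (fun x : ℝ => (1 - q^2 * Real.sin (am x) ^ 2) ^ (1/p)) Set.univ := by
  have hq2 : q ^ 2 < 1 := pow_lt_one₀ hq.1 hq.2 two_ne_zero
  let e : ℝ ≃ₜ ℝ := (StrictMono.orderIsoOfSurjective (F2 p q) (strictMono_F2 hq2 p)
    fun x => ⟨am x, (ham.2 x).2⟩).toHomeomorph
  have ham_eq : am = e.symm := funext fun x => (e.symm_apply_eq.2 (ham.2 x).2.symm).symm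
  have ham_smooth : ContDiff ℝ ω am := ham_eq ▸ e.contDiff_symm_deriv
    (fun x => (Real.rpow_pos_of_pos (one_sub_sq_mul_sin_sq_pos hq2 x) _).ne')
    (hasDerivAt_F2 hq2 p) (contDiff_F2 hq2 p)
  exact ((contDiff_one_sub_sq_mul_sin_sq_rpow hq2 (1 / p)).comp ham_smooth).analyticOnNhd

/-- For `p ∈ (1,∞)` and `q ∈ [0,1)`, the function `dn_p(·,q)` is real analytic on `ℝ`. -/
theorem dnp_analytic (p q : ℝ) (hp : 1 < p) (hq : q ∈ Set.Ico (0:ℝ) 1)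
    (am : ℝ → ℝ) (ham : IsInverseOn (F2 p q) am Set.univ) :
    AnalyticOnNhd ℝ (fun x : ℝ => (1 - q^2 * Real.sin (am x) ^ 2) ^ (1/p)) Set.univ :=
  dnp_analytic_general p q hq am ham
end
end

section
/- For q ∈ (0,1] and x in the domain, ∫₀^x sin(2·am_{2,p}(σ,q)) dσ = (1/q²)·(p/(p-1))·(1 - dn_p(x,q)^{p-1}). -/
open Real MeasureTheory Set intervalIntegral Filter

noncomputable section

/-!
Substituting `σ = F2 p q θ` turns the integrand into `sin 2θ · (1 - q² sin² θ)^(-1/p)`,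
which has the explicit primitive `(1/q²)(p/(p-1))(1 - (1 - q² sin² θ)^((p-1)/p))`.
Rather than substituting, we differentiate this primitive composed with `am`: since
`am' = dn_p`, the chain rule gives `sin (2 am σ)` except where `dn_p` vanishes
(`q = 1`, `cos (am σ) = 0`), a countable set, which the fundamental theorem of calculus
tolerates.
-/

section PrimitiveInverse

variable {f F am : ℝ → ℝ} {S : Set ℝ}

theorem IsInverseOn.range_eq (h : IsInverseOn F am S) : range am = S :=
  Subset.antisymm (range_subset_iff.2 fun x => (h.2 x).1) fun y hy => ⟨F y, h.1 y hy⟩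

theorem IsInverseOn.strictMono_s10 (h : IsInverseOn F am S) (hF : MonotoneOn F S) :
    StrictMono am := by
  intro u v huv
  by_contra! hvu
  have := hF (h.2 v).1 (h.2 u).1 hvu
  rw [(h.2 u).2, (h.2 v).2] at this
  exact this.not_gt huv

theorem IsInverseOn.continuous (h : IsInverseOn F am S) (hF : MonotoneOn F S)
    (hS : S.OrdConnected) : Continuous am :=
  ((h.strictMono_s10 hF).isEmbedding_of_ordConnected (h.range_eq ▸ hS)).continuous

theorem IsInverseOn.hasDerivAt {F' x : ℝ} (h : IsInverseOn F am S) (hc : Continuous am)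
    (hF : HasDerivAt F F' (am x)) (hF' : F' ≠ 0) : HasDerivAt am F'⁻¹ x :=
  hF.of_local_left_inverse hc.continuousAt hF' (Eventually.of_forall fun y => (h.2 y).2)

/-- If `f` were not integrable on `[0, y]`, the junk value `0` of its integral would give
`y = am 0 = 0`. -/
theorem IsInverseOn.intervalIntegrable (h : IsInverseOn (fun x => ∫ θ in (0:ℝ)..x, f θ) am S)
    (h0 : 0 ∈ S) {y : ℝ} (hy : y ∈ S) : IntervalIntegrable f volume 0 y := by
  by_contra hf
  have hy0 : y = 0 :=
    calc y = am (∫ θ in (0:ℝ)..y, f θ) := (h.1 y hy).symm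
      _ = am (∫ θ in (0:ℝ)..0, f θ) := by rw [integral_undef hf, integral_same]
      _ = 0 := h.1 0 h0
  exact hf (hy0 ▸ IntervalIntegrable.refl)

theorem monotoneOn_primitive (hf : ∀ x, 0 ≤ f x)
    (hint : ∀ y ∈ S, IntervalIntegrable f volume 0 y) :
    MonotoneOn (fun x => ∫ θ in (0:ℝ)..x, f θ) S := by
  intro a ha b hb hab
  have : 0 ≤ (∫ θ in (0:ℝ)..b, f θ) - ∫ θ in (0:ℝ)..a, f θ := by
    rw [integral_interval_sub_left (hint b hb) (hint a ha)]
    exact integral_nonneg hab fun x _ => hf x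
  linarith

end PrimitiveInverse

theorem zero_mem_amDom (p q : ℝ) : (0:ℝ) ∈ amDom p q := by
  unfold amDom
  split_ifs
  · exact ⟨by linarith [pi_pos], by linarith [pi_pos]⟩
  · trivial

theorem amDom_ordConnected (p q : ℝ) : (amDom p q).OrdConnected := by
  unfold amDom
  split_ifs
  · exact ordConnected_Ioo
  · exact ordConnected_univ

section Dn

variable {p q : ℝ}

theorem one_sub_sq_mul_sin_sq_nonneg (hq : q ^ 2 ≤ 1) (θ : ℝ) :
    0 ≤ 1 - q ^ 2 * sin θ ^ 2 := by
  nlinarith [sin_sq_le_one θ, sq_nonneg (sin θ)]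

theorem countable_setOf_one_sub_sq_mul_sin_sq_eq_zero (hq : q ^ 2 ≤ 1) :
    {θ : ℝ | 1 - q ^ 2 * sin θ ^ 2 = 0}.Countable := by
  refine (countable_range fun k : ℤ => (2 * k + 1) * π / 2).mono fun θ hθ => ?_
  have hcos : cos θ ^ 2 = 0 := by
    nlinarith [sin_sq_add_cos_sq θ, sin_sq_le_one θ, sq_nonneg (cos θ), sq_nonneg (sin θ),
      show (1 - q ^ 2 * sin θ ^ 2) = 0 from hθ]
  obtain ⟨k, hk⟩ := cos_eq_zero_iff.1 (pow_eq_zero_iff two_ne_zero |>.1 hcos)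
  exact ⟨k, hk.symm⟩

theorem hasDerivAt_F2_s10 {θ : ℝ} (hθ : 1 - q ^ 2 * sin θ ^ 2 ≠ 0)
    (hint : IntervalIntegrable (fun t => (1 - q ^ 2 * sin t ^ 2) ^ (-(1/p))) volume 0 θ) :
    HasDerivAt (F2 p q) ((1 - q ^ 2 * sin θ ^ 2) ^ (-(1/p))) θ := by
  have hcont : Continuous fun t => 1 - q ^ 2 * sin t ^ 2 := by fun_prop
  exact integral_hasDerivAt_right hint
    (hcont.measurable.pow_const _).aestronglyMeasurable.stronglyMeasurableAtFilter
    (hcont.continuousAt.rpow_const (Or.inl hθ))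

/-- `(1/q²)(p/(p-1))(1 - dn_p^(p-1))` written in terms of the amplitude `θ = am_{2,p}`. -/
def sinDnPrimitive (p q θ : ℝ) : ℝ :=
  1 / q ^ 2 * (p / (p - 1)) * (1 - (1 - q ^ 2 * sin θ ^ 2) ^ ((p - 1) / p))

theorem sinDnPrimitive_zero : sinDnPrimitive p q 0 = 0 := by
  simp [sinDnPrimitive]

theorem continuous_sinDnPrimitive (hp : 1 ≤ p) : Continuous (sinDnPrimitive p q) := by
  have hexp : 0 ≤ (p - 1) / p := div_nonneg (by linarith) (by linarith)
  unfold sinDnPrimitive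
  exact continuous_const.mul (continuous_const.sub
    ((by fun_prop : Continuous fun t => 1 - q ^ 2 * sin t ^ 2).rpow_const fun _ => Or.inr hexp))

theorem hasDerivAt_sinDnPrimitive (hp₀ : p ≠ 0) (hp₁ : p ≠ 1) (hq : q ≠ 0) {θ : ℝ}
    (hθ : 1 - q ^ 2 * sin θ ^ 2 ≠ 0) :
    HasDerivAt (sinDnPrimitive p q)
      (sin (2 * θ) * (1 - q ^ 2 * sin θ ^ 2) ^ (-(1/p))) θ := by
  have hbase :
      HasDerivAt (fun t => 1 - q ^ 2 * sin t ^ 2) (-(q ^ 2 * (2 * sin θ * cos θ))) θ := by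
    simpa using ((hasDerivAt_sin θ).pow 2).const_mul (q ^ 2) |>.const_sub 1
  refine ((hbase.rpow_const (p := (p - 1) / p) (Or.inl hθ)).const_sub 1
    |>.const_mul (1 / q ^ 2 * (p / (p - 1)))).congr_deriv ?_
  have hp₁' : p - 1 ≠ 0 := sub_ne_zero.2 hp₁
  rw [show (p - 1) / p - 1 = -(1/p) by field_simp; ring, sin_two_mul]
  field_simp

end Dn

/-- For `q ∈ (0,1]`, `∫₀^x sin(2·am_{2,p}(σ,q)) dσ = (1/q²)(p/(p-1))(1 - dn_p(x,q)^{p-1})`. -/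
theorem orbitlike_sine_integral (p q : ℝ) (hp : 1 < p) (hq : q ∈ Set.Ioc (0:ℝ) 1)
    (am : ℝ → ℝ) (ham : IsInverseOn (F2 p q) am (amDom p q)) :
    ∀ x : ℝ,
      (∫ σ in (0:ℝ)..x, Real.sin (2 * am σ))
        = (1/q^2) * (p/(p-1))
            * (1 - ((1 - q^2 * Real.sin (am x) ^ 2) ^ (1/p)) ^ (p-1)) := by
  intro x
  have hq2 : q ^ 2 ≤ 1 := pow_le_one₀ hq.1.le hq.2
  have hint := fun y (hy : y ∈ amDom p q) => ham.intervalIntegrable (zero_mem_amDom p q) hy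
  have hcont : Continuous am := ham.continuous
    (monotoneOn_primitive (fun θ => rpow_nonneg (one_sub_sq_mul_sin_sq_nonneg hq2 θ) _) hint)
    (amDom_ordConnected p q)
  have ham0 : am 0 = 0 := by
    simpa [F2] using ham.1 0 (zero_mem_amDom p q)
  have hderiv : ∀ σ ∉ F2 p q '' {θ | 1 - q ^ 2 * sin θ ^ 2 = 0},
      HasDerivAt (fun σ => sinDnPrimitive p q (am σ)) (sin (2 * am σ)) σ := by
    intro σ hσ
    have hb : 1 - q ^ 2 * sin (am σ) ^ 2 ≠ 0 := fun h => hσ ⟨am σ, h, (ham.2 σ).2⟩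
    have hpos := rpow_pos_of_pos ((one_sub_sq_mul_sin_sq_nonneg hq2 _).lt_of_ne' hb) (-(1/p))
    refine ((hasDerivAt_sinDnPrimitive (by linarith) hp.ne' hq.1.ne' hb).comp σ
      (ham.hasDerivAt hcont (hasDerivAt_F2_s10 hb (hint _ (ham.2 σ).1)) hpos.ne')).congr_deriv ?_
    field_simp
  have hftc := integral_eq_of_hasDerivAt_off_countable _ _
    ((countable_setOf_one_sub_sq_mul_sin_sq_eq_zero hq2).image _)
    ((continuous_sinDnPrimitive hp.le).comp hcont).continuousOn (fun σ hσ => hderiv σ hσ.2)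
    ((by fun_prop : Continuous fun σ => sin (2 * am σ)).intervalIntegrable 0 x)
  rw [hftc, Function.comp_apply, Function.comp_apply, ham0, sinDnPrimitive_zero, sub_zero,
    sinDnPrimitive, ← rpow_mul (one_sub_sq_mul_sin_sq_nonneg hq2 _), mul_comm (1 / p),
    mul_one_div]
end
end

section
/- Let λ > 0 and min F < D < 0 with F as above. Then the equation F(x) = D has exactly four real solutions; if ξ > 0 denotes the largest one, the four solutions are −ξ < −(2λ/(p-1) − ξ^{p/(p-1)})^{(p-1)/p} < (2λ/(p-1) − ξ^{p/(p-1)})^{(p-1)/p} < ξ. -/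
open Real MeasureTheory Set intervalIntegral Filter

noncomputable section

/-
Writing `t = |x|^{p/(p-1)}`, one has `F(x) = ((p-1) t - λ)² - λ²`, so `F ≥ -λ²` and, for
`-λ² < D < 0` and `s = √(λ² + D) ∈ (0, λ)`, `F(x) = D` exactly when `(p-1) t = λ ± s`.
Both values are positive, and each gives the two solutions `x = ±((λ ± s)/(p-1))^{(p-1)/p}`.
The smaller root is expressed through `ξ` via `ξ^{p/(p-1)} + η^{p/(p-1)} = 2λ/(p-1)`.
-/

def F (p lam x : ℝ) : ℝ :=
  (p-1)^2 * |x| ^ (2*p/(p-1)) - 2*lam*(p-1) * |x| ^ (p/(p-1))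

/-- The nonnegative `x` with `(p-1) * x ^ (p/(p-1)) = c`. -/
def Froot (p c : ℝ) : ℝ := (c / (p-1)) ^ ((p-1)/p)

lemma F_eq_sq_sub_sq (p lam x : ℝ) :
    F p lam x = ((p-1) * |x| ^ (p/(p-1)) - lam)^2 - lam^2 := by
  have hsq : |x| ^ (2*p/(p-1)) = (|x| ^ (p/(p-1)))^2 := by
    rw [← Real.rpow_mul_natCast (abs_nonneg x)]
    congr 1
    push_cast
    ring
  rw [F, hsq]
  ring

lemma neg_sq_le_F (p lam x : ℝ) : -lam^2 ≤ F p lam x := by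
  rw [F_eq_sq_sub_sq]
  linarith [sq_nonneg ((p-1) * |x| ^ (p/(p-1)) - lam)]

lemma sub_sq_sub_sq_eq_iff {u lam D : ℝ} (h : 0 ≤ lam^2 + D) :
    (u - lam)^2 - lam^2 = D ↔ u = lam + √(lam^2 + D) ∨ u = lam - √(lam^2 + D) := by
  rw [sub_eq_iff_eq_add, add_comm D, ← Real.sq_sqrt h, sq_eq_sq_iff_eq_or_eq_neg,
    sub_eq_iff_eq_add', sub_eq_iff_eq_add', ← sub_eq_add_neg, Real.sq_sqrt h]

lemma abs_rpow_eq_iff {x τ α : ℝ} (hτ : 0 ≤ τ) (hα : α ≠ 0) :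
    |x| ^ α = τ ↔ x = τ ^ α⁻¹ ∨ x = -τ ^ α⁻¹ := by
  rw [← Real.eq_rpow_inv (abs_nonneg x) hτ hα, abs_eq (Real.rpow_nonneg hτ _)]

lemma mul_abs_rpow_eq_iff {p : ℝ} (hp : 1 < p) {x c : ℝ} (hc : 0 ≤ c) :
    (p-1) * |x| ^ (p/(p-1)) = c ↔ x = Froot p c ∨ x = -Froot p c := by
  have hp1 : 0 < p - 1 := sub_pos.2 hp
  rw [mul_comm, ← eq_div_iff hp1.ne', abs_rpow_eq_iff (div_nonneg hc hp1.le)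
    (div_pos (by linarith) hp1).ne', inv_div, Froot]

lemma Froot_rpow {p : ℝ} (hp : 1 < p) {c : ℝ} (hc : 0 ≤ c) :
    Froot p c ^ (p/(p-1)) = c / (p-1) := by
  have hp1 : 0 < p - 1 := sub_pos.2 hp
  rw [Froot, ← inv_div (p - 1) p,
    Real.rpow_rpow_inv (div_nonneg hc hp1.le) (div_pos hp1 (by linarith)).ne']

lemma Froot_pos {p : ℝ} (hp : 1 < p) {c : ℝ} (hc : 0 < c) : 0 < Froot p c :=
  Real.rpow_pos_of_pos (div_pos hc (sub_pos.2 hp)) _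

lemma Froot_lt_Froot {p : ℝ} (hp : 1 < p) {c d : ℝ} (hc : 0 ≤ c) (hcd : c < d) :
    Froot p c < Froot p d := by
  have hp1 : 0 < p - 1 := sub_pos.2 hp
  exact Real.rpow_lt_rpow (div_nonneg hc hp1.le) (div_lt_div_of_pos_right hcd hp1)
    (div_pos hp1 (by linarith))

lemma F_eq_iff {p lam D x : ℝ} (hp : 1 < p) (hDmin : 0 ≤ lam^2 + D)
    (hslam : √(lam^2 + D) ≤ lam) :
    F p lam x = D ↔
      x = Froot p (lam + √(lam^2 + D)) ∨ x = -Froot p (lam + √(lam^2 + D)) ∨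
      x = Froot p (lam - √(lam^2 + D)) ∨ x = -Froot p (lam - √(lam^2 + D)) := by
  have hs := Real.sqrt_nonneg (lam^2 + D)
  rw [F_eq_sq_sub_sq, sub_sq_sub_sq_eq_iff hDmin, mul_abs_rpow_eq_iff hp (by linarith),
    mul_abs_rpow_eq_iff hp (by linarith), or_assoc]

/-- For `λ > 0` and `min F < D < 0`, the equation `F(x) = D` has exactly four solutions
`-ξ < -η < η < ξ` with `η = (2λ/(p-1) - ξ^{p/(p-1)})^{(p-1)/p}` and `ξ` the largest one. -/
theorem four_solutions (p lam D : ℝ) (hp : 1 < p) (hlam : 0 < lam) (hD : D < 0)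
    (hmin : ∃ x : ℝ, (p-1)^2 * |x| ^ (2*p/(p-1)) - 2*lam*(p-1) * |x| ^ (p/(p-1)) < D) :
    ∃ ξ : ℝ, 0 < ξ ∧
      ((p-1)^2 * |ξ| ^ (2*p/(p-1)) - 2*lam*(p-1) * |ξ| ^ (p/(p-1)) = D) ∧
      (∀ x : ℝ, (p-1)^2 * |x| ^ (2*p/(p-1)) - 2*lam*(p-1) * |x| ^ (p/(p-1)) = D → x ≤ ξ) ∧
      {x : ℝ | (p-1)^2 * |x| ^ (2*p/(p-1)) - 2*lam*(p-1) * |x| ^ (p/(p-1)) = D}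
        = {-ξ, -((2*lam/(p-1) - ξ ^ (p/(p-1))) ^ ((p-1)/p)),
            (2*lam/(p-1) - ξ ^ (p/(p-1))) ^ ((p-1)/p), ξ} ∧
      -ξ < -((2*lam/(p-1) - ξ ^ (p/(p-1))) ^ ((p-1)/p)) ∧
      (0:ℝ) < (2*lam/(p-1) - ξ ^ (p/(p-1))) ^ ((p-1)/p) ∧
      (2*lam/(p-1) - ξ ^ (p/(p-1))) ^ ((p-1)/p) < ξ := by
  obtain ⟨x₀, hx₀⟩ := hmin
  have hDmin : -lam^2 < D := (neg_sq_le_F p lam x₀).trans_lt hx₀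
  have hslam : √(lam^2 + D) < lam := (Real.sqrt_lt' hlam).2 (by linarith)
  have hsol (x : ℝ) := F_eq_iff (x := x) hp (by linarith) hslam.le
  set s := √(lam^2 + D)
  have hs : 0 < s := Real.sqrt_pos.2 (by linarith)
  have hη : (2*lam/(p-1) - Froot p (lam + s) ^ (p/(p-1))) ^ ((p-1)/p) = Froot p (lam - s) := by
    rw [Froot_rpow hp (by linarith), Froot]
    congr 1
    ring
  have hηξ : Froot p (lam - s) < Froot p (lam + s) :=
    Froot_lt_Froot hp (by linarith) (by linarith)
  have hη_pos : 0 < Froot p (lam - s) := Froot_pos hp (by linarith)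
  refine ⟨Froot p (lam + s), hη_pos.trans hηξ, (hsol _).2 (Or.inl rfl), fun x hx => ?_, ?_,
    ?_, ?_, ?_⟩
  · rcases (hsol x).1 hx with rfl | rfl | rfl | rfl <;> linarith
  all_goals rw [hη]
  · ext x
    simp only [Set.mem_ofPred_eq, Set.mem_insert_iff, Set.mem_singleton_iff]
    rw [← F, hsol x]
    tauto
  all_goals linarith
end
end

section
/- For every p ∈ (1,∞), the function X_{2,p}(q) := ∫₀^{π/2} cos(2θ)·(1 − q² sin²θ)^{-1/p} dθ satisfies X_{2,p}(q) < 0 for all q ∈ (0,1); moreover X_{2,p} is strictly decreasing on [0,1) with limit 0 as q → 0⁺. -/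
open Real MeasureTheory Set intervalIntegral Filter

noncomputable section

namespace X2pAux

lemma base_pos {q s : ℝ} (hq : q ^ 2 < 1) (hs1 : s ≤ 1) :
    0 < 1 - q ^ 2 * s := by nlinarith [sq_nonneg q]

lemma cont_sin {q e : ℝ} (hq : q ^ 2 < 1) :
    Continuous fun θ : ℝ => Real.cos (2 * θ) * (1 - q ^ 2 * Real.sin θ ^ 2) ^ e := by
  refine Continuous.mul (by continuity) (Continuous.rpow_const (by continuity) ?_)
  exact fun θ => Or.inl (base_pos hq (Real.sin_sq_le_one θ)).ne'

lemma cont_cos {q e : ℝ} (hq : q ^ 2 < 1) :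
    Continuous fun θ : ℝ => Real.cos (2 * θ) * (1 - q ^ 2 * Real.cos θ ^ 2) ^ e := by
  refine Continuous.mul (by continuity) (Continuous.rpow_const (by continuity) ?_)
  exact fun θ => Or.inl (base_pos hq (Real.cos_sq_le_one θ)).ne'

lemma hasDeriv_aux {p t : ℝ} (ht : 0 ≤ t) (ht1 : t ≤ 1) {q : ℝ} (hq : q ^ 2 < 1) :
    HasDerivAt (fun x : ℝ => (1 - x ^ 2 * t) ^ (-(1 / p)))
      ((-(2 * q * t)) * (-(1 / p)) * (1 - q ^ 2 * t) ^ (-(1 / p) - 1)) q := by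
  have h1 : HasDerivAt (fun x : ℝ => 1 - x ^ 2 * t) (-(2 * q * t)) q := by
    have := ((hasDerivAt_pow 2 q).mul_const t).const_sub 1
    simpa using this
  exact h1.rpow_const (Or.inl (base_pos hq ht1).ne')

lemma diff_anti {p : ℝ} (hp : 1 < p) {s c : ℝ} (hs : 0 ≤ s) (hsc : s ≤ c) (hc : c ≤ 1)
    {a b : ℝ} (ha : 0 ≤ a) (hab : a ≤ b) (hb : b < 1) :
    (1 - b ^ 2 * s) ^ (-(1 / p)) - (1 - b ^ 2 * c) ^ (-(1 / p))
      ≤ (1 - a ^ 2 * s) ^ (-(1 / p)) - (1 - a ^ 2 * c) ^ (-(1 / p)) := by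
  have hp0 : 0 < 1 / p := by positivity
  have hsq : ∀ x ∈ Icc a b, x ^ 2 < 1 := by
    intro x hx
    have hx0 : 0 ≤ x := le_trans ha hx.1
    nlinarith [hx.2, hb]
  have hs1 : s ≤ 1 := le_trans hsc hc
  have hc0 : 0 ≤ c := le_trans hs hsc
  have key : AntitoneOn
      (fun q : ℝ => (1 - q ^ 2 * s) ^ (-(1 / p)) - (1 - q ^ 2 * c) ^ (-(1 / p))) (Icc a b) := by
    have hderiv : ∀ x ∈ Icc a b, HasDerivAt
        (fun q : ℝ => (1 - q ^ 2 * s) ^ (-(1 / p)) - (1 - q ^ 2 * c) ^ (-(1 / p)))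
        ((-(2 * x * s)) * (-(1 / p)) * (1 - x ^ 2 * s) ^ (-(1 / p) - 1)
          - (-(2 * x * c)) * (-(1 / p)) * (1 - x ^ 2 * c) ^ (-(1 / p) - 1)) x := by
      intro x hx
      exact (hasDeriv_aux hs hs1 (hsq x hx)).sub (hasDeriv_aux hc0 hc (hsq x hx))
    apply antitoneOn_of_deriv_nonpos (convex_Icc a b)
    · exact fun x hx => (hderiv x hx).continuousAt.continuousWithinAt
    · intro x hx
      rw [interior_Icc] at hx
      exact (hderiv x (Ioo_subset_Icc_self hx)).differentiableAt.differentiableWithinAt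
    · intro x hx
      rw [interior_Icc] at hx
      rw [(hderiv x (Ioo_subset_Icc_self hx)).deriv]
      have hx0 : 0 ≤ x := le_trans ha hx.1.le
      have hxq := hsq x (Ioo_subset_Icc_self hx)
      set A := (1 - x ^ 2 * s) ^ (-(1 / p) - 1) with hA
      set B := (1 - x ^ 2 * c) ^ (-(1 / p) - 1) with hB
      have hAB : A ≤ B := by
        apply Real.rpow_le_rpow_of_nonpos (base_pos hxq hc)
        · nlinarith [sq_nonneg x]
        · linarith
      have hA0 : 0 ≤ A := Real.rpow_nonneg (base_pos hxq hs1).le _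
      have hB0 : 0 ≤ B := Real.rpow_nonneg (base_pos hxq hc).le _
      have h1 : s * A ≤ c * B := by
        calc s * A ≤ s * B := mul_le_mul_of_nonneg_left hAB hs
        _ ≤ c * B := mul_le_mul_of_nonneg_right hsc hB0
      nlinarith [mul_nonneg (mul_nonneg (by linarith : (0:ℝ) ≤ 2 * x) hp0.le)
        (by linarith : 0 ≤ c * B - s * A)]
  exact key (left_mem_Icc.2 hab) (right_mem_Icc.2 hab) hab

lemma split {p q : ℝ} (hq : q ^ 2 < 1) :
    (∫ θ in (0:ℝ)..(π/2), Real.cos (2*θ) * (1 - q^2 * Real.sin θ ^ 2) ^ (-(1/p)))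
    = ∫ θ in (0:ℝ)..(π/4), Real.cos (2*θ) *
        ((1 - q^2 * Real.sin θ ^ 2) ^ (-(1/p)) - (1 - q^2 * Real.cos θ ^ 2) ^ (-(1/p))) := by
  set F : ℝ → ℝ := fun θ => Real.cos (2*θ) * (1 - q^2 * Real.sin θ ^ 2) ^ (-(1/p)) with hF
  set G : ℝ → ℝ := fun θ => Real.cos (2*θ) * (1 - q^2 * Real.cos θ ^ 2) ^ (-(1/p)) with hG
  have hFc : Continuous F := cont_sin hq
  have hGc : Continuous G := cont_cos hq
  have i1 : IntervalIntegrable F volume 0 (π/4) := hFc.intervalIntegrable _ _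
  have i2 : IntervalIntegrable F volume (π/4) (π/2) := hFc.intervalIntegrable _ _
  have i3 : IntervalIntegrable G volume 0 (π/4) := hGc.intervalIntegrable _ _
  have hFval : ∀ θ : ℝ, F (π/2 - θ) = -G θ := by
    intro θ
    have h1 : Real.cos (2*(π/2 - θ)) = -Real.cos (2*θ) := by
      rw [show 2*(π/2 - θ) = π - 2*θ by ring, Real.cos_pi_sub]
    simp only [hF, hG, h1, Real.sin_pi_div_two_sub]
    ring
  have hsub : (∫ θ in (π/4:ℝ)..(π/2), F θ) = -∫ θ in (0:ℝ)..(π/4), G θ := by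
    have h2 : (∫ θ in (0:ℝ)..(π/4), F (π/2 - θ)) = ∫ θ in (π/4:ℝ)..(π/2), F θ := by
      rw [intervalIntegral.integral_comp_sub_left F (π/2)]
      rw [show π/2 - π/4 = π/4 by ring, show π/2 - (0:ℝ) = π/2 by ring]
    rw [← h2]
    simp only [hFval]
    rw [intervalIntegral.integral_neg]
  calc (∫ θ in (0:ℝ)..(π/2), F θ)
      = (∫ θ in (0:ℝ)..(π/4), F θ) + ∫ θ in (π/4:ℝ)..(π/2), F θ :=
        (intervalIntegral.integral_add_adjacent_intervals i1 i2).symm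
    _ = (∫ θ in (0:ℝ)..(π/4), F θ) - ∫ θ in (0:ℝ)..(π/4), G θ := by rw [hsub]; ring
    _ = ∫ θ in (0:ℝ)..(π/4), (F θ - G θ) := (intervalIntegral.integral_sub i1 i3).symm
    _ = _ := by
        apply intervalIntegral.integral_congr
        intro θ _
        simp only [hF, hG]
        ring

lemma int_cos_two : (∫ θ in (0:ℝ)..(π/2), Real.cos (2*θ)) = 0 := by
  have h := intervalIntegral.integral_comp_mul_left (f := Real.cos) (a := 0) (b := π/2)
    (c := 2) two_ne_zero
  simp only [mul_zero] at h
  rw [h, show 2 * (π/2) = π by ring, integral_cos]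
  simp

lemma strictAntiOn_main {p : ℝ} (hp : 1 < p) :
    StrictAntiOn (fun q => ∫ θ in (0:ℝ)..(π/2),
        Real.cos (2*θ) * (1 - q^2 * Real.sin θ ^ 2) ^ (-(1/p))) (Set.Ico (0:ℝ) 1) := by
  intro q1 hq1 q2 hq2 h12
  have hq1sq : q1 ^ 2 < 1 := by nlinarith [hq1.1, hq1.2]
  have hq2sq : q2 ^ 2 < 1 := by nlinarith [hq2.1, hq2.2]
  simp only
  rw [split hq1sq, split hq2sq]
  have hab : (0:ℝ) < π/4 := by positivity
  apply intervalIntegral.integral_lt_integral_of_continuousOn_of_le_of_exists_lt hab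
  · exact Continuous.continuousOn (by
      refine Continuous.mul (by continuity) (Continuous.sub ?_ ?_)
      · exact Continuous.rpow_const (by continuity)
          (fun θ => Or.inl (base_pos hq2sq (Real.sin_sq_le_one θ)).ne')
      · exact Continuous.rpow_const (by continuity)
          (fun θ => Or.inl (base_pos hq2sq (Real.cos_sq_le_one θ)).ne'))
  · exact Continuous.continuousOn (by
      refine Continuous.mul (by continuity) (Continuous.sub ?_ ?_)
      · exact Continuous.rpow_const (by continuity)
          (fun θ => Or.inl (base_pos hq1sq (Real.sin_sq_le_one θ)).ne')
      · exact Continuous.rpow_const (by continuity)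
          (fun θ => Or.inl (base_pos hq1sq (Real.cos_sq_le_one θ)).ne'))
  · intro θ hθ
    have hθ2 : 2*θ ∈ Icc (-(π/2)) (π/2) := by
      constructor
      · have := pi_pos; linarith [hθ.1]
      · linarith [hθ.2]
    have hcos2 : 0 ≤ Real.cos (2*θ) := Real.cos_nonneg_of_mem_Icc hθ2
    have hcs : Real.sin θ ^ 2 ≤ Real.cos θ ^ 2 := by
      nlinarith [Real.sin_sq_add_cos_sq θ, Real.cos_two_mul θ]
    exact mul_le_mul_of_nonneg_left
      (diff_anti hp (sq_nonneg _) hcs (Real.cos_sq_le_one θ) hq1.1 h12.le hq2.2) hcos2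
  · refine ⟨0, ⟨le_refl 0, by positivity⟩, ?_⟩
    have h1 : (1 - q1^2 : ℝ) ^ (-(1/p)) < (1 - q2^2) ^ (-(1/p)) := by
      apply Real.rpow_lt_rpow_of_neg (by linarith) (by nlinarith [hq1.1])
      have : 0 < 1/p := by positivity
      linarith
    simp only [mul_zero, Real.cos_zero, Real.sin_zero, one_mul, one_pow, mul_one,
      zero_pow, ne_eq, OfNat.ofNat_ne_zero, not_false_eq_true, sub_zero, Real.one_rpow]
    linarith

lemma value_at_zero {p : ℝ} :
    (∫ θ in (0:ℝ)..(π/2),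
      Real.cos (2*θ) * (1 - (0:ℝ)^2 * Real.sin θ ^ 2) ^ (-(1/p))) = 0 := by
  have h : (∫ θ in (0:ℝ)..(π/2),
      Real.cos (2*θ) * (1 - (0:ℝ)^2 * Real.sin θ ^ 2) ^ (-(1/p)))
      = ∫ θ in (0:ℝ)..(π/2), Real.cos (2*θ) := by
    apply intervalIntegral.integral_congr
    intro θ _
    norm_num
  rw [h, int_cos_two]

lemma tendsto_zero {p : ℝ} (hp : 1 < p) :
    Tendsto (fun q => ∫ θ in (0:ℝ)..(π/2),
        Real.cos (2*θ) * (1 - q^2 * Real.sin θ ^ 2) ^ (-(1/p)))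
      (nhdsWithin 0 (Ioi (0:ℝ))) (nhds 0) := by
  have hmem : Ioo (0:ℝ) (1/2) ∈ nhdsWithin 0 (Ioi (0:ℝ)) :=
    Ioo_mem_nhdsGT_of_mem (by norm_num : (0:ℝ) ∈ Ico (0:ℝ) (1/2))
  have h := intervalIntegral.tendsto_integral_filter_of_dominated_convergence
    (μ := volume) (a := (0:ℝ)) (b := π/2)
    (F := fun (q : ℝ) (θ : ℝ) => Real.cos (2*θ) * (1 - q^2 * Real.sin θ ^ 2) ^ (-(1/p)))
    (f := fun θ => Real.cos (2*θ)) (l := nhdsWithin 0 (Ioi (0:ℝ)))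
    (fun _ => (3/4 : ℝ) ^ (-(1/p)))
    ?_ ?_ ?_ ?_
  · rwa [int_cos_two] at h
  · filter_upwards [hmem] with q hq
    have : q ^ 2 < 1 := by nlinarith [hq.1, hq.2]
    exact (cont_sin this).aestronglyMeasurable
  · filter_upwards [hmem] with q hq
    apply Eventually.of_forall
    intro θ _
    have hq2 : q ^ 2 < 1/4 := by nlinarith [hq.1, hq.2]
    have hbase : 3/4 ≤ 1 - q^2 * Real.sin θ ^ 2 := by
      nlinarith [Real.sin_sq_le_one θ, sq_nonneg q, Real.sin_sq_le_one θ,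
        mul_nonneg (sq_nonneg q) (sq_nonneg (Real.sin θ))]
    have hpos : (0:ℝ) < 1 - q^2 * Real.sin θ ^ 2 := by linarith
    have hb : (1 - q^2 * Real.sin θ ^ 2) ^ (-(1/p)) ≤ (3/4 : ℝ) ^ (-(1/p)) := by
      apply Real.rpow_le_rpow_of_nonpos (by norm_num) hbase
      have : 0 < 1/p := by positivity
      linarith
    have hb0 : 0 ≤ (1 - q^2 * Real.sin θ ^ 2) ^ (-(1/p)) := Real.rpow_nonneg hpos.le _
    rw [Real.norm_eq_abs, abs_mul, abs_of_nonneg hb0]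
    calc |Real.cos (2*θ)| * (1 - q^2 * Real.sin θ ^ 2) ^ (-(1/p))
        ≤ 1 * (3/4 : ℝ) ^ (-(1/p)) :=
          mul_le_mul (Real.abs_cos_le_one _) hb hb0 zero_le_one
      _ = (3/4 : ℝ) ^ (-(1/p)) := one_mul _
  · exact _root_.intervalIntegrable_const
  · apply Eventually.of_forall
    intro θ _
    have hc : ContinuousAt
        (fun q : ℝ => Real.cos (2*θ) * (1 - q^2 * Real.sin θ ^ 2) ^ (-(1/p))) 0 := by
      apply ContinuousAt.mul continuousAt_const
      apply ContinuousAt.rpow_const (by fun_prop)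
      left
      norm_num
    have h0 : Real.cos (2*θ) * (1 - (0:ℝ)^2 * Real.sin θ ^ 2) ^ (-(1/p))
        = Real.cos (2*θ) := by norm_num
    have ht := hc.tendsto.mono_left (nhdsWithin_le_nhds (s := Ioi (0:ℝ)))
    rwa [h0] at ht

end X2pAux

/-- `X_{2,p}(q) = ∫₀^{π/2} cos 2θ · (1-q² sin²θ)^{-1/p} dθ` is negative on `(0,1)`,
strictly decreasing on `[0,1)`, and tends to `0` as `q → 0⁺`. -/
theorem X2p_negative (p : ℝ) (hp : 1 < p) :
    (∀ q ∈ Set.Ioo (0:ℝ) 1,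
      (∫ θ in (0:ℝ)..(π/2),
        Real.cos (2*θ) * (1 - q^2 * Real.sin θ ^ 2) ^ (-(1/p))) < 0) ∧
    StrictAntiOn (fun q => ∫ θ in (0:ℝ)..(π/2),
        Real.cos (2*θ) * (1 - q^2 * Real.sin θ ^ 2) ^ (-(1/p))) (Set.Ico (0:ℝ) 1) ∧
    Filter.Tendsto (fun q => ∫ θ in (0:ℝ)..(π/2),
        Real.cos (2*θ) * (1 - q^2 * Real.sin θ ^ 2) ^ (-(1/p)))
      (nhdsWithin 0 (Set.Ioi (0:ℝ))) (nhds 0) := by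
  refine ⟨?_, X2pAux.strictAntiOn_main hp, X2pAux.tendsto_zero hp⟩
  intro q hq
  have h := X2pAux.strictAntiOn_main (p := p) hp
    (Set.mem_Ico.2 ⟨le_refl 0, one_pos⟩) (Set.mem_Ico.2 ⟨hq.1.le, hq.2⟩) hq.1
  simp only at h
  rwa [X2pAux.value_at_zero] at h
end
end
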